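/- In the commutative ring R = ℚ[y,q] modulo the relation y⁶ = 4qy, the elements y₂ = y², y₃ = y³/2, y₄ = y⁴/2, y₅ = y⁵/2 − q satisfy y·y₅ = q·y, y₂·y₄ = 2q·y, y₃·y₃ = q·y, and y₅·y₅ = q². -/
import Mathlib


set_option maxHeartbeats 1000000 in
set_option synthInstance.maxHeartbeats 400000 in
open MvPolynomial in
/-- In `R = ℚ[y,q]/(y⁶ − 4qy)` (modelling `QH*(G₂/P₁)`), the Schubert classes
`y₂ = y²`, `y₃ = y³/2`, `y₄ = y⁴/2`, `y₅ = y⁵/2 − q` satisfy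
`y⋅y₅ = q⋅y`, `y₂⋅y₄ = 2q⋅y`, `y₃⋅y₃ = q⋅y`, `y₅⋅y₅ = q²`. -/
theorem stmt_5 :
    ∀ (Y Q : MvPolynomial (Fin 2) ℚ), Y = X 0 → Q = X 1 →
    ∀ (I : Ideal (MvPolynomial (Fin 2) ℚ)), I = Ideal.span {Y ^ 6 - 4 * Q * Y} →
    ∀ y q : MvPolynomial (Fin 2) ℚ ⧸ I,
      y = Ideal.Quotient.mk I Y → q = Ideal.Quotient.mk I Q →
    ∀ y₂ y₃ y₄ y₅ : MvPolynomial (Fin 2) ℚ ⧸ I,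
      y₂ = y ^ 2 → y₃ = ((2 : ℚ)⁻¹) • y ^ 3 → y₄ = ((2 : ℚ)⁻¹) • y ^ 4 →
      y₅ = ((2 : ℚ)⁻¹) • y ^ 5 - q →
      y * y₅ = q * y ∧ y₂ * y₄ = (2 : ℚ) • (q * y) ∧ y₃ * y₃ = q * y ∧
        y₅ * y₅ = q ^ 2 := by
  intro Y Q hY hQ I hI y q hy hq y₂ y₃ y₄ y₅ h2 h3 h4 h5
  have h6 : y ^ 6 = 4 * q * y := by
    subst hy hq hI
    have h : Ideal.Quotient.mk (Ideal.span {Y ^ 6 - 4 * Q * Y}) (Y ^ 6 - 4 * Q * Y) = 0 :=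
      Ideal.Quotient.eq_zero_iff_mem.2 (Ideal.subset_span rfl)
    rw [RingHom.map_sub, sub_eq_zero, RingHom.map_pow, RingHom.map_mul, RingHom.map_mul,
      map_ofNat] at h
    exact h
  set c : MvPolynomial (Fin 2) ℚ ⧸ I := algebraMap ℚ _ (2⁻¹ : ℚ) with hc
  have hc2 : c * 2 = 1 := by
    rw [hc, show ((2 : MvPolynomial (Fin 2) ℚ ⧸ I) = algebraMap ℚ _ 2) from (map_ofNat _ 2).symm,
      ← map_mul]
    norm_num
  have hs : ∀ x : MvPolynomial (Fin 2) ℚ ⧸ I, (2 : ℚ)⁻¹ • x = c * x := fun x => by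
    rw [← smul_eq_mul, algebraMap_smul]
  have hs2 : ∀ x : MvPolynomial (Fin 2) ℚ ⧸ I, (2 : ℚ) • x = 2 * x := fun x => by
    rw [two_smul, two_mul]
  rw [hs] at h3 h4 h5
  subst h2 h3 h4 h5
  refine ⟨?_, ?_, ?_, ?_⟩
  · linear_combination c * h6 + 2 * q * y * hc2
  · rw [hs2]; linear_combination c * h6 + 2 * q * y * hc2
  · linear_combination c * c * h6 + (c * 2 * q * y + q * y) * hc2
  · linear_combination c * c * y ^ 4 * h6 + 2 * c * q * y ^ 5 * hc2
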